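/- Decoding ignores extra flags and extra arguments: for every type symbol T, every assignment σ, all lists of formulas f and g, and all lists of abstract values as and bs, if decode_T applied to the abstract value with flags f and arguments as is defined under σ, then decode_T applied to the abstract value with flags f ++ g and arguments as ++ bs is also defined under σ and yields the same concrete value. -/
import Mathlib


/-- Abstract values over propositional variables `V`: a list of (semantic) formulas
(the *flags*) together with a list of abstract values (the *arguments*). -/
inductive AVal (V : Type) : Type where
  | mk : List ((V → Bool) → Bool) → List (AVal V) → AVal V

/-- The flags of an abstract value. -/
def AVal.flags {V : Type} : AVal V → List ((V → Bool) → Bool)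
  | .mk f _ => f

/-- The arguments of an abstract value. -/
def AVal.args {V : Type} : AVal V → List (AVal V)
  | .mk _ a => a

/-- A signature: every type symbol `T` gets a nonempty finite list of constructors,
each given by its finite list of argument type symbols. -/
structure Signature (τ : Type) where
  ctors : τ → List (List τ)
  ctors_ne : ∀ T, ctors T ≠ []

/-- Untyped data terms; the first component is the (1-based) rank of the
constructor. -/
inductive Value : Type where
  | mk : ℕ → List Value → Value

/-- Well-typed concrete values of type `T`: `C_i(v_1, …, v_n)` where `C_i` is the
`i`-th constructor of `T` with argument types `T_1, …, T_n` and each `v_j` is a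
well-typed value of type `T_j`. -/
inductive WT {τ : Type} (sig : Signature τ) : τ → Value → Prop where
  | mk {T : τ} {i : ℕ} {argTys : List τ} {vals : List Value} :
      1 ≤ i → (sig.ctors T)[i - 1]? = some argTys →
      List.Forall₂ (WT sig) argTys vals → WT sig T (.mk i vals)

/-- `numeric n w = some i` iff `w` has a (unique) prefix `u ∈ S n` of lexicographic
rank `i` in `S n`; extra bits beyond the prefix are ignored. -/
def numeric : ℕ → List Bool → Option ℕ
  | 0, _ => none
  | 1, _ => some 1
  | _ + 2, [] => none
  | n + 2, false :: w => numeric ((n + 2 + 1) / 2) w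
  | n + 2, true :: w => (numeric ((n + 2) / 2) w).map (fun i => (n + 2 + 1) / 2 + i)
termination_by n _ => n
decreasing_by all_goals omega

/-- `strOf n i` is the element of `S n` of lexicographic rank `i` (for `1 ≤ i ≤ n`). -/
def strOf : ℕ → ℕ → List Bool
  | 0, _ => []
  | 1, _ => []
  | n + 2, i =>
      if i ≤ (n + 2 + 1) / 2 then false :: strOf ((n + 2 + 1) / 2) i
      else true :: strOf ((n + 2) / 2) (i - (n + 2 + 1) / 2)
termination_by n _ => n
decreasing_by all_goals omega
mutual
  /-- Encoding of a concrete value of type `T` as an abstract value: the flags are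
  constant formulas representing the rank-`i` element of `S c(T)`, and the arguments
  are the encodings of the constructor arguments at their respective types. -/
  def encode {V τ : Type} (sig : Signature τ) : τ → Value → AVal V
    | T, .mk i vals =>
        .mk ((strOf (sig.ctors T).length i).map (fun b => fun _ => b))
          (encodeList sig ((sig.ctors T).getD (i - 1) []) vals)
  termination_by _ v => sizeOf v

  /-- Pointwise encoding of a list of values at a list of types. -/
  def encodeList {V τ : Type} (sig : Signature τ) : List τ → List Value → List (AVal V)
    | t :: ts, v :: vs => encode sig t v :: encodeList sig ts vs
    | _, _ => []
  termination_by _ vs => sizeOf vs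
end

mutual
  /-- Decoding of an abstract value at type `T` under an assignment `σ` (a partial
  function): the flags are evaluated under `σ`; if the resulting bit string has a
  prefix in `S c(T)` determining constructor rank `i` of `T`, and there are enough
  arguments, the first arguments are decoded at the argument types of the `i`-th
  constructor of `T`; otherwise decoding is undefined. -/
  def decode {V τ : Type} (sig : Signature τ) : τ → AVal V → (V → Bool) → Option Value
    | T, .mk flags args, σ =>
        match numeric (sig.ctors T).length (flags.map (fun f => f σ)) with
        | none => none
        | some i =>
            match (sig.ctors T)[i - 1]? with
            | none => none
            | some argTys =>
                if argTys.length ≤ args.length then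
                  (decodeList sig argTys args σ).map (Value.mk i)
                else none
  termination_by _ a _ => sizeOf a

  /-- Pointwise decoding of (a prefix of) a list of abstract values at a list of
  types. -/
  def decodeList {V τ : Type} (sig : Signature τ) :
      List τ → List (AVal V) → (V → Bool) → Option (List Value)
    | [], _, _ => some []
    | _ :: _, [], _ => none
    | t :: ts, a :: as, σ =>
        match decode sig t a σ with
        | none => none
        | some v => (decodeList sig ts as σ).map (fun vs => v :: vs)
  termination_by _ as _ => sizeOf as
end

lemma numeric_append (n : ℕ) (w g : List Bool) (i : ℕ)
    (h : numeric n w = some i) : numeric n (w ++ g) = some i := by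
  induction n, w using numeric.induct generalizing i g with
  | case1 w => simp [numeric] at h
  | case2 w => simp [numeric] at h ⊢; exact h
  | case3 n => simp [numeric] at h
  | case4 n w ih =>
    rw [numeric.eq_def] at h
    rw [List.cons_append, numeric.eq_def]
    exact ih g i h
  | case5 n w ih =>
    rw [numeric.eq_def] at h
    rw [List.cons_append, numeric.eq_def]
    dsimp only at h ⊢
    rw [Option.map_eq_some_iff] at h ⊢
    obtain ⟨j, hj, rfl⟩ := h
    exact ⟨j, ih g j hj, rfl⟩

lemma decodeList_append {V τ : Type} (sig : Signature τ) (σ : V → Bool)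
    (ts : List τ) (as bs : List (AVal V)) (vs : List Value)
    (h : decodeList sig ts as σ = some vs) :
    decodeList sig ts (as ++ bs) σ = some vs := by
  induction ts generalizing as vs with
  | nil => simpa [decodeList] using h
  | cons t ts ih =>
    cases as with
    | nil => simp [decodeList] at h
    | cons a as =>
      rw [List.cons_append]
      rw [decodeList] at h ⊢
      cases hd : decode sig t a σ with
      | none => rw [hd] at h; simp at h
      | some v =>
        rw [hd] at h
        simp only [Option.map_eq_some_iff] at h ⊢
        obtain ⟨ws, hws, rfl⟩ := h
        exact ⟨ws, ih as ws hws, rfl⟩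

/-- Decoding ignores extra flags and extra arguments: if decoding the abstract value
with flags `f` and arguments `as` is defined under `σ`, then decoding the abstract
value with flags `f ++ g` and arguments `as ++ bs` is also defined under `σ` and
yields the same concrete value. -/
theorem decode_extend {V τ : Type} (sig : Signature τ) (T : τ) (σ : V → Bool)
    (f g : List ((V → Bool) → Bool)) (as bs : List (AVal V)) (v : Value)
    (h : decode sig T (.mk f as) σ = some v) :
    decode sig T (.mk (f ++ g) (as ++ bs)) σ = some v := by
  rw [decode] at h ⊢
  cases hn : numeric (sig.ctors T).length (f.map (fun f => f σ)) with
  | none => rw [hn] at h; simp at h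
  | some i =>
    rw [hn] at h
    have hn' : numeric (sig.ctors T).length ((f ++ g).map (fun f => f σ)) = some i := by
      rw [List.map_append]; exact numeric_append _ _ _ _ hn
    rw [hn']
    dsimp only at h ⊢
    cases ha : (sig.ctors T)[i - 1]? with
    | none => rw [ha] at h; exact absurd h (by simp)
    | some argTys =>
      simp only [ha] at h ⊢
      split at h
      · rename_i hlen
        rw [if_pos (by simp; omega)]
        rw [Option.map_eq_some_iff] at h ⊢
        obtain ⟨vs, hvs, rfl⟩ := h
        exact ⟨vs, decodeList_append sig σ _ _ _ _ hvs, rfl⟩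
      · simp at h
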